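/- Let λ⁽¹⁾, …, λ⁽ᵏ⁾ be partitions with at most n parts, let s = s_{λ⁽¹⁾} + ⋯ + s_{λ⁽ᵏ⁾} in ℤ[x₁,…,x_n], and for t ∈ ℤ_{>0} define ts = Σ_{I} s_{λ_I} summed over all size-t multisubsets I of {1,…,k}, where λ_I = Σ_{i∈I} λ⁽ⁱ⁾. If for every t the support of ts equals the set of lattice points of t·Newt(s), then Newt(s) has the integer decomposition property. -/

import Mathlib

open Pointwise

/-- The content of a semistandard Young tableau: `content T v` is the number of cells whose
entry equals `v`. -/
def content {μ : YoungDiagram} (T : SemistandardYoungTableau μ) (v : ℕ) : ℕ :=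
  (μ.cells.filter fun c => T c.1 c.2 = v).card

/-- The set of content vectors of semistandard Young tableaux of shape `D` with entries in
`{0, …, n-1}`; this is the support of the Schur polynomial `s_D` in `n` variables. -/
def ssytContents (D : YoungDiagram) (n : ℕ) : Set (Fin n → ℕ) :=
  {α | ∃ T : SemistandardYoungTableau D,
    (∀ c ∈ D.cells, T c.1 c.2 < n) ∧ ∀ i : Fin n, content T (i : ℕ) = α i}

/-- Cast a vector of naturals to a real vector. -/
def castN {n : ℕ} (α : Fin n → ℕ) : Fin n → ℝ := fun i => (α i : ℝ)

/-- Cast a vector of integers to a real vector. -/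
def castZ {n : ℕ} (y : Fin n → ℤ) : Fin n → ℝ := fun i => (y i : ℝ)

/-- The support of `ts = Σ_I s_{λ_I}`, summed over all size-`t` multisubsets `I` of
`{1,…,k}`, where `λ_I = Σ_{i ∈ I} λ⁽ⁱ⁾` (as a sum of row lengths). -/
def suppTS {k : ℕ} (lam : Fin k → YoungDiagram) (n t : ℕ) : Set (Fin n → ℕ) :=
  {α | ∃ I : Multiset (Fin k), Multiset.card I = t ∧
    ∃ D : YoungDiagram, (∀ r : ℕ, D.rowLen r = (I.map fun i => (lam i).rowLen r).sum) ∧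
      α ∈ ssytContents D n}

/-!
By hypothesis, a lattice point of `(t+1) • Newt(s)` is the content `α` of a semistandard tableau
of shape `λ_I` with `|I| = t + 1`. Writing `λ_I = λ⁽ⁱ⁾ + λ_J` row by row, it suffices to split
`α = β + γ` with `β` a content of shape `λ⁽ⁱ⁾` and `γ` one of shape `λ_J`: then `β ∈ Newt(s)`,
`γ` is a lattice point of `t • Newt(s)` by the hypothesis again, and induction on `t` finishes.

The split is proved by induction on the number of variables. Removing the largest entry `n` of a
tableau of shape `ν = ν₁ + ν₂` leaves a tableau of shape `μ` with `ν / μ` a horizontal strip;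
`μ` splits greedily as `μ₁ + μ₂` with each `νᵢ / μᵢ` a horizontal strip, and filling those strips
with `n` extends the split of the smaller contents.
-/

open Finset

namespace YoungDiagram

theorem le_iff_rowLen_le {μ ν : YoungDiagram} : μ ≤ ν ↔ ∀ r, μ.rowLen r ≤ ν.rowLen r := by
  constructor
  · intro h r
    refine le_of_forall_lt fun j hj => ?_
    rw [← mem_iff_lt_rowLen] at hj ⊢
    exact h hj
  · intro h c hc
    exact mem_iff_lt_rowLen.2 ((mem_iff_lt_rowLen.1 hc).trans_le (h c.1))

theorem rowLen_colLen_zero (μ : YoungDiagram) : μ.rowLen (μ.colLen 0) = 0 := by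
  by_contra h
  exact lt_irrefl _ (mem_iff_lt_colLen.1 (mem_iff_lt_rowLen.2 (Nat.pos_of_ne_zero h)))

theorem card_eq_sum_rowLen {μ : YoungDiagram} {N : ℕ} (hN : μ.rowLen N = 0) :
    μ.card = ∑ r ∈ range N, μ.rowLen r := by
  rw [YoungDiagram.card, card_eq_sum_card_fiberwise (f := Prod.fst) (t := range N)]
  · simp only [rowLen_eq_card]
    rfl
  · intro c hc
    have hc' : c.2 < μ.rowLen c.1 := mem_iff_lt_rowLen.1 ((mem_cells c).1 hc)
    by_contra hcN
    have := μ.rowLen_anti N c.1 (by simpa using hcN)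
    omega

theorem card_eq_add_of_rowLen_eq_add {ν ν₁ ν₂ : YoungDiagram}
    (h : ν.rowLen = ν₁.rowLen + ν₂.rowLen) : ν.card = ν₁.card + ν₂.card := by
  have hN := congrFun h (ν.colLen 0)
  simp only [Pi.add_apply, rowLen_colLen_zero] at hN
  rw [card_eq_sum_rowLen (rowLen_colLen_zero ν), card_eq_sum_rowLen (N := ν.colLen 0) (by omega),
    card_eq_sum_rowLen (μ := ν₂) (N := ν.colLen 0) (by omega), ← sum_add_distrib]
  exact sum_congr rfl fun r _ => congrFun h r

theorem exists_rowLen_eq {μ : YoungDiagram} {g : ℕ → ℕ} (hg : Antitone g)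
    (hle : ∀ r, g r ≤ μ.rowLen r) : ∃ ν : YoungDiagram, ν.rowLen = g := by
  refine ⟨⟨{c ∈ μ.cells | c.2 < g c.1}, fun x y hxy hx => ?_⟩, funext fun r => ?_⟩
  · simp only [coe_filter, Set.mem_ofPred_eq, mem_cells] at hx ⊢
    exact ⟨μ.isLowerSet hxy hx.1, hxy.2.trans_lt (hx.2.trans_le (hg hxy.1))⟩
  · refine eq_of_forall_lt_iff fun j => ?_
    rw [← mem_iff_lt_rowLen]
    change (r, j) ∈ ({c ∈ μ.cells | c.2 < g c.1} : Finset (ℕ × ℕ)) ↔ _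
    rw [mem_filter, mem_cells, mem_iff_lt_rowLen]
    exact ⟨And.right, fun hj => ⟨hj.trans_le (hle r), hj⟩⟩

/-- `ν / μ` is a horizontal strip. -/
def IsHorizontalStrip (μ ν : YoungDiagram) : Prop :=
  ∀ r, μ.rowLen r ≤ ν.rowLen r ∧ ν.rowLen (r + 1) ≤ μ.rowLen r

theorem IsHorizontalStrip.le {μ ν : YoungDiagram} (h : IsHorizontalStrip μ ν) : μ ≤ ν :=
  le_iff_rowLen_le.2 fun r => (h r).1

theorem IsHorizontalStrip.exists_split {μ ν ν₁ ν₂ : YoungDiagram} (h : IsHorizontalStrip μ ν)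
    (hν : ν.rowLen = ν₁.rowLen + ν₂.rowLen) :
    ∃ μ₁ μ₂ : YoungDiagram, μ.rowLen = μ₁.rowLen + μ₂.rowLen ∧
      IsHorizontalStrip μ₁ ν₁ ∧ IsHorizontalStrip μ₂ ν₂ := by
  -- greedy choice: give `μ₁` as few cells as interlacing with `ν₁` and `μ ≤ ν` allow
  set p : ℕ → ℕ := fun r => max (ν₁.rowLen (r + 1)) (μ.rowLen r - ν₂.rowLen r)
  have key : ∀ r, (p r ≤ ν₁.rowLen r ∧ ν₁.rowLen (r + 1) ≤ p r) ∧
      (μ.rowLen r - p r ≤ ν₂.rowLen r ∧ ν₂.rowLen (r + 1) ≤ μ.rowLen r - p r) ∧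
      p r ≤ μ.rowLen r := by
    intro r
    have := h r
    have := congrFun hν r
    have := congrFun hν (r + 1)
    have := ν₁.rowLen_anti r (r + 1) r.le_succ
    have := ν₂.rowLen_anti r (r + 1) r.le_succ
    simp only [Pi.add_apply, p] at *
    omega
  obtain ⟨μ₁, hμ₁⟩ := exists_rowLen_eq (μ := ν₁) (g := p)
    (antitone_nat_of_succ_le fun r => ((key (r + 1)).1.1.trans (key r).1.2)) fun r => (key r).1.1
  obtain ⟨μ₂, hμ₂⟩ := exists_rowLen_eq (μ := ν₂) (g := μ.rowLen - p)
    (antitone_nat_of_succ_le fun r => ((key (r + 1)).2.1.1.trans (key r).2.1.2))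
    fun r => (key r).2.1.1
  refine ⟨μ₁, μ₂, ?_, fun r => hμ₁ ▸ (key r).1, fun r => hμ₂ ▸ (key r).2.1⟩
  funext r
  simp only [hμ₁, hμ₂, Pi.add_apply, Pi.sub_apply]
  have := (key r).2.2
  omega

end YoungDiagram

namespace SemistandardYoungTableau

open YoungDiagram

variable {μ ν : YoungDiagram}

def restrict (T : SemistandardYoungTableau ν) (h : μ ≤ ν) : SemistandardYoungTableau μ where
  entry i j := if (i, j) ∈ μ then T i j else 0
  row_weak' hj hcell := by
    rw [if_pos hcell, if_pos (μ.up_left_mem le_rfl hj.le hcell)]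
    exact T.row_weak hj (h hcell)
  col_strict' hi hcell := by
    rw [if_pos hcell, if_pos (μ.up_left_mem hi.le le_rfl hcell)]
    exact T.col_strict hi (h hcell)
  zeros' hc := if_neg hc

theorem restrict_apply_of_mem (T : SemistandardYoungTableau ν) (h : μ ≤ ν) {i j : ℕ}
    (hc : (i, j) ∈ μ) : T.restrict h i j = T i j :=
  if_pos hc

theorem content_restrict (T : SemistandardYoungTableau ν) (h : μ ≤ ν) (v : ℕ) :
    content (T.restrict h) v = #{c ∈ μ.cells | T c.1 c.2 = v} := by
  unfold content
  congr 1
  exact filter_congr fun c hc => by rw [T.restrict_apply_of_mem h ((mem_cells c).1 hc)]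

def shapeBelow (T : SemistandardYoungTableau ν) (v : ℕ) : YoungDiagram where
  cells := {c ∈ ν.cells | T c.1 c.2 < v}
  isLowerSet x y hxy hx := by
    simp only [coe_filter, Set.mem_ofPred_eq, mem_cells] at hx ⊢
    refine ⟨ν.isLowerSet hxy hx.1, lt_of_le_of_lt ?_ hx.2⟩
    exact (T.row_weak_of_le hxy.2 (ν.up_left_mem hxy.1 le_rfl hx.1)).trans (T.col_weak hxy.1 hx.1)

theorem mem_shapeBelow {T : SemistandardYoungTableau ν} {v : ℕ} {c : ℕ × ℕ} :
    c ∈ T.shapeBelow v ↔ c ∈ ν ∧ T c.1 c.2 < v :=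
  mem_filter

theorem shapeBelow_le (T : SemistandardYoungTableau ν) (v : ℕ) : T.shapeBelow v ≤ ν :=
  fun _ hc => (mem_shapeBelow.1 hc).1

theorem isHorizontalStrip_shapeBelow (T : SemistandardYoungTableau ν) {v : ℕ}
    (hT : ∀ c ∈ ν.cells, T c.1 c.2 < v + 1) : IsHorizontalStrip (T.shapeBelow v) ν := by
  refine fun r => ⟨le_iff_rowLen_le.1 (T.shapeBelow_le v) r, le_of_forall_lt fun j hj => ?_⟩
  rw [← mem_iff_lt_rowLen] at hj ⊢
  have h₁ : T r j < T (r + 1) j := T.col_strict r.lt_succ_self hj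
  have h₂ : T (r + 1) j < v + 1 := hT _ ((mem_cells _).2 hj)
  exact mem_shapeBelow.2 ⟨ν.up_left_mem r.le_succ le_rfl hj, show T r j < v by omega⟩

theorem content_restrict_shapeBelow (T : SemistandardYoungTableau ν) {v w : ℕ} (hw : w < v) :
    content (T.restrict (T.shapeBelow_le v)) w = content T w := by
  rw [content_restrict, content]
  change #{c ∈ {c ∈ ν.cells | T c.1 c.2 < v} | T c.1 c.2 = w} = _
  rw [filter_filter]
  congr 1
  exact filter_congr fun c _ => and_iff_right_of_imp fun h => h ▸ hw

theorem content_add_card_shapeBelow (T : SemistandardYoungTableau ν) {v : ℕ}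
    (hT : ∀ c ∈ ν.cells, T c.1 c.2 < v + 1) : content T v + (T.shapeBelow v).card = ν.card := by
  have : (T.shapeBelow v).cells = {c ∈ ν.cells | ¬ T c.1 c.2 = v} :=
    filter_congr fun c hc => by have := hT c hc; omega
  rw [content, YoungDiagram.card, this, card_filter_add_card_filter_not]

def extendStrip (T : SemistandardYoungTableau μ) (h : IsHorizontalStrip μ ν) (v : ℕ)
    (hT : ∀ c ∈ μ.cells, T c.1 c.2 < v) : SemistandardYoungTableau ν where
  entry i j := if (i, j) ∈ μ then T i j else if (i, j) ∈ ν then v else 0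
  row_weak' {i j₁ j₂} hj hcell := by
    by_cases h₂ : (i, j₂) ∈ μ
    · rw [if_pos h₂, if_pos (μ.up_left_mem le_rfl hj.le h₂)]
      exact T.row_weak hj h₂
    · rw [if_neg h₂, if_pos hcell]
      split_ifs with h₁
      exacts [(hT _ ((mem_cells _).2 h₁)).le, le_rfl, absurd (ν.up_left_mem le_rfl hj.le hcell) ‹_›]
  col_strict' {i₁ i₂ j} hi hcell := by
    by_cases h₂ : (i₂, j) ∈ μ
    · rw [if_pos h₂, if_pos (μ.up_left_mem hi.le le_rfl h₂)]
      exact T.col_strict hi h₂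
    · -- the cell above a strip cell lies in `μ`, since rows of `ν` interlace those of `μ`
      have h₁ : (i₁, j) ∈ μ := by
        rw [mem_iff_lt_rowLen] at hcell ⊢
        have := ν.rowLen_anti (i₁ + 1) i₂ hi
        have := (h i₁).2
        omega
      rw [if_neg h₂, if_pos hcell, if_pos h₁]
      exact hT _ ((mem_cells _).2 h₁)
  zeros' {i j} hc := by
    rw [if_neg fun h' => hc (h.le h'), if_neg hc]

theorem extendStrip_apply (T : SemistandardYoungTableau μ) (h : IsHorizontalStrip μ ν) (v : ℕ)
    (hT : ∀ c ∈ μ.cells, T c.1 c.2 < v) (i j : ℕ) :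
    T.extendStrip h v hT i j = if (i, j) ∈ μ then T i j else if (i, j) ∈ ν then v else 0 :=
  rfl

theorem content_extendStrip (T : SemistandardYoungTableau μ) (h : IsHorizontalStrip μ ν) {v w : ℕ}
    (hT : ∀ c ∈ μ.cells, T c.1 c.2 < v) (hw : w < v) :
    content (T.extendStrip h v hT) w = content T w := by
  unfold content
  congr 1
  ext c
  rw [mem_filter, mem_filter]
  simp only [mem_cells, extendStrip_apply]
  by_cases hc : c ∈ μ
  · simp [hc, h.le hc]
  · simp only [hc, if_false, false_and, iff_false]
    rintro ⟨hν, hcw⟩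
    rw [if_pos hν] at hcw
    omega

theorem content_extendStrip_self (T : SemistandardYoungTableau μ) (h : IsHorizontalStrip μ ν)
    {v : ℕ} (hT : ∀ c ∈ μ.cells, T c.1 c.2 < v) :
    content (T.extendStrip h v hT) v = ν.card - μ.card := by
  have : {c ∈ ν.cells | T.extendStrip h v hT c.1 c.2 = v} = ν.cells \ μ.cells := by
    ext c
    rw [mem_filter, mem_sdiff]
    simp only [mem_cells, extendStrip_apply]
    by_cases hc : c ∈ μ
    · simp only [hc, if_true, not_true, and_false, iff_false]
      exact fun h' => (hT _ ((mem_cells _).2 hc)).ne h'.2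
    · simp only [hc, not_false_eq_true, and_true]
      exact ⟨And.left, fun hν => ⟨hν, if_pos hν⟩⟩
  rw [content, this, card_sdiff_of_subset (cells_subset_iff.2 h.le), YoungDiagram.card,
    YoungDiagram.card]

end SemistandardYoungTableau

open YoungDiagram SemistandardYoungTableau

theorem mem_ssytContents_zero_iff {ν : YoungDiagram} {α : Fin 0 → ℕ} :
    α ∈ ssytContents ν 0 ↔ ν.rowLen 0 = 0 := by
  constructor
  · rintro ⟨T, hT, -⟩
    by_contra h
    have h₀ : (0, 0) ∈ ν := mem_iff_lt_rowLen.2 (Nat.pos_of_ne_zero h)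
    exact Nat.not_lt_zero _ (hT (0, 0) ((mem_cells _).2 h₀))
  · intro h
    refine ⟨highestWeight ν, fun c hc => ?_, fun i => i.elim0⟩
    have h₀ : (0, 0) ∈ ν := ν.up_left_mem c.1.zero_le c.2.zero_le ((mem_cells c).1 hc)
    rw [mem_iff_lt_rowLen, h] at h₀
    exact absurd h₀ (Nat.lt_irrefl 0)

theorem exists_isHorizontalStrip_of_mem_ssytContents_succ {ν : YoungDiagram} {n : ℕ}
    {α : Fin (n + 1) → ℕ} (hα : α ∈ ssytContents ν (n + 1)) :
    ∃ μ, IsHorizontalStrip μ ν ∧ Fin.init α ∈ ssytContents μ n ∧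
      α (Fin.last n) + μ.card = ν.card := by
  obtain ⟨T, hT, hα⟩ := hα
  refine ⟨T.shapeBelow n, T.isHorizontalStrip_shapeBelow hT,
    ⟨T.restrict (T.shapeBelow_le n), fun c hc => ?_, fun i => ?_⟩, ?_⟩
  · rw [restrict_apply_of_mem _ _ ((mem_cells c).1 hc)]
    exact (mem_shapeBelow.1 hc).2
  · rw [content_restrict_shapeBelow T i.isLt]
    exact hα i.castSucc
  · rw [← hα (Fin.last n)]
    exact content_add_card_shapeBelow T hT

theorem snoc_mem_ssytContents_succ {μ ν : YoungDiagram} (h : IsHorizontalStrip μ ν) {n : ℕ}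
    {β : Fin n → ℕ} (hβ : β ∈ ssytContents μ n) :
    (Fin.snoc β (ν.card - μ.card) : Fin (n + 1) → ℕ) ∈ ssytContents ν (n + 1) := by
  obtain ⟨T, hT, hβ⟩ := hβ
  refine ⟨T.extendStrip h n hT, fun c hc => ?_, Fin.lastCases ?_ fun i => ?_⟩
  · rw [extendStrip_apply]
    split_ifs with hcμ
    · exact (hT _ ((mem_cells _).2 hcμ)).trans n.lt_succ_self
    all_goals omega
  · rw [Fin.snoc_last, Fin.val_last, content_extendStrip_self]
  · rw [Fin.snoc_castSucc, Fin.val_castSucc, content_extendStrip T h hT i.isLt, hβ]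

theorem exists_add_of_mem_ssytContents {n : ℕ} {ν ν₁ ν₂ : YoungDiagram}
    (hν : ν.rowLen = ν₁.rowLen + ν₂.rowLen) {α : Fin n → ℕ} (hα : α ∈ ssytContents ν n) :
    ∃ β ∈ ssytContents ν₁ n, ∃ γ ∈ ssytContents ν₂ n, α = β + γ := by
  induction n generalizing ν ν₁ ν₂ with
  | zero =>
    have h₀ := congrFun hν 0
    rw [Pi.add_apply, mem_ssytContents_zero_iff.1 hα] at h₀
    exact ⟨0, mem_ssytContents_zero_iff.2 (by omega), 0, mem_ssytContents_zero_iff.2 (by omega),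
      Subsingleton.elim _ _⟩
  | succ n ih =>
    obtain ⟨μ, hμ, hinit, hlast⟩ := exists_isHorizontalStrip_of_mem_ssytContents_succ hα
    obtain ⟨μ₁, μ₂, hμ, hμ₁, hμ₂⟩ := hμ.exists_split hν
    obtain ⟨β, hβ, γ, hγ, hβγ⟩ := ih hμ hinit
    refine ⟨_, snoc_mem_ssytContents_succ hμ₁ hβ, _, snoc_mem_ssytContents_succ hμ₂ hγ, ?_⟩
    have hcardν := card_eq_add_of_rowLen_eq_add hν
    have hcardμ := card_eq_add_of_rowLen_eq_add hμ
    have h₁ : μ₁.card ≤ ν₁.card := card_le_card (cells_subset_iff.2 hμ₁.le)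
    have h₂ : μ₂.card ≤ ν₂.card := card_le_card (cells_subset_iff.2 hμ₂.le)
    funext i
    refine Fin.lastCases ?_ (fun i => ?_) i
    · simp only [Pi.add_apply, Fin.snoc_last]
      omega
    · simpa [Fin.init] using congrFun hβγ i

theorem exists_add_of_mem_suppTS_succ {k n t : ℕ} {lam : Fin k → YoungDiagram}
    {α : Fin n → ℕ} (hα : α ∈ suppTS lam n (t + 1)) :
    ∃ i, ∃ β ∈ ssytContents (lam i) n, ∃ γ ∈ suppTS lam n t, α = β + γ := by
  obtain ⟨I, hI, ν, hν, hα⟩ := hα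
  obtain ⟨i, hi⟩ := Multiset.card_pos_iff_exists_mem.1 (by rw [hI]; exact t.succ_pos)
  obtain ⟨J, rfl⟩ := Multiset.exists_cons_of_mem hi
  set g : ℕ → ℕ := fun r => (J.map fun j => (lam j).rowLen r).sum
  have hνg : ν.rowLen = (lam i).rowLen + g := funext fun r => by simp [hν r, g]
  obtain ⟨ν₂, hν₂⟩ := exists_rowLen_eq (μ := ν) (g := g)
    (fun r s hrs => Multiset.sum_map_le_sum_map _ _ fun j _ => (lam j).rowLen_anti r s hrs)
    fun r => by rw [hνg]; exact Nat.le_add_left _ _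
  obtain ⟨β, hβ, γ, hγ, rfl⟩ := exists_add_of_mem_ssytContents (ν₁ := lam i) (ν₂ := ν₂)
    (by rw [hνg, hν₂]) hα
  exact ⟨i, β, hβ, γ, ⟨J, by simpa using hI, ν₂, fun r => congrFun hν₂ r, hγ⟩, rfl⟩

def HasIDP {n : ℕ} (P : Set (Fin n → ℝ)) : Prop :=
  ∀ t : ℕ, ∀ y : Fin n → ℤ, castZ y ∈ (t : ℝ) • P →
    ∃ f : Fin t → (Fin n → ℤ), (∀ j, castZ (f j) ∈ P) ∧ y = ∑ j, f j

theorem HasIDP.of_split_succ_smul {n : ℕ} {P : Set (Fin n → ℝ)}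
    (hsplit : ∀ t : ℕ, 0 < t → ∀ y : Fin n → ℤ, castZ y ∈ ((t + 1 : ℕ) : ℝ) • P →
      ∃ a b : Fin n → ℤ, castZ a ∈ P ∧ castZ b ∈ (t : ℝ) • P ∧ y = a + b) :
    HasIDP P := by
  intro t
  induction t with
  | zero =>
    rintro y ⟨p, -, hp⟩
    refine ⟨Fin.elim0, fun j => j.elim0, funext fun i => ?_⟩
    simpa [castZ] using (congrFun hp i).symm
  | succ t ih =>
    rcases t.eq_zero_or_pos with rfl | ht
    · exact fun y hy => ⟨fun _ => y, fun _ => by simpa using hy, by simp⟩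
    · intro y hy
      obtain ⟨a, b, ha, hb, rfl⟩ := hsplit t ht y hy
      obtain ⟨f, hf, rfl⟩ := ih b hb
      exact ⟨Fin.cons a f, Fin.cases ha hf, by rw [Fin.sum_cons]⟩

theorem stmt_13_general (n k : ℕ) (lam : Fin k → YoungDiagram)
    (hsnp : ∀ t : ℕ, 0 < t → ∀ y : Fin n → ℤ,
      castZ y ∈ (t : ℝ) • convexHull ℝ (castN '' ⋃ i, ssytContents (lam i) n) ↔
        ∃ α ∈ suppTS lam n t, y = fun i => (α i : ℤ)) :
    ∀ t : ℕ, ∀ y : Fin n → ℤ,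
      castZ y ∈ (t : ℝ) • convexHull ℝ (castN '' ⋃ i, ssytContents (lam i) n) →
      ∃ f : Fin t → (Fin n → ℤ),
        (∀ j, castZ (f j) ∈ convexHull ℝ (castN '' ⋃ i, ssytContents (lam i) n)) ∧
        y = ∑ j, f j := by
  refine HasIDP.of_split_succ_smul fun t ht y hy => ?_
  obtain ⟨α, hα, rfl⟩ := (hsnp (t + 1) t.succ_pos y).1 hy
  obtain ⟨i, β, hβ, γ, hγ, rfl⟩ := exists_add_of_mem_suppTS_succ hα
  have hβP : castN β ∈ convexHull ℝ (castN '' ⋃ i, ssytContents (lam i) n) :=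
    subset_convexHull ℝ _ ⟨β, Set.mem_iUnion.2 ⟨i, hβ⟩, rfl⟩
  refine ⟨fun j => β j, fun j => γ j, ?_, (hsnp t ht _).2 ⟨γ, hγ, rfl⟩, ?_⟩
  · convert hβP using 1
    funext j
    simp [castZ, castN]
  · funext j
    simp

/-- Let `λ⁽¹⁾, …, λ⁽ᵏ⁾` be partitions with at most `n` parts and
`s = s_{λ⁽¹⁾} + ⋯ + s_{λ⁽ᵏ⁾}`, and for `t > 0` let `ts = Σ_I s_{λ_I}` over size-`t`
multisubsets `I`.  If for every `t > 0` the support of `ts` equals the set of lattice points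
of `t · Newt(s)`, then `Newt(s)` has the integer decomposition property. -/
theorem stmt_13 (n k : ℕ) (lam : Fin k → YoungDiagram)
    (hparts : ∀ i, (lam i).colLen 0 ≤ n)
    (hsnp : ∀ t : ℕ, 0 < t → ∀ y : Fin n → ℤ,
      castZ y ∈ (t : ℝ) • convexHull ℝ (castN '' ⋃ i, ssytContents (lam i) n) ↔
        ∃ α ∈ suppTS lam n t, y = fun i => (α i : ℤ)) :
    ∀ t : ℕ, ∀ y : Fin n → ℤ,
      castZ y ∈ (t : ℝ) • convexHull ℝ (castN '' ⋃ i, ssytContents (lam i) n) →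
      ∃ f : Fin t → (Fin n → ℤ),
        (∀ j, castZ (f j) ∈ convexHull ℝ (castN '' ⋃ i, ssytContents (lam i) n)) ∧
        y = ∑ j, f j :=
  stmt_13_general n k lam hsnp
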